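/- arXiv:2504.09565 — 4 statements merged into one kernel-verified Lean document; each statement's English description precedes it below -/
import Mathlib

section
/- Let b > 0, ε real with b + ε > 0, and k real. The propagation matrix P = -A₆⁻¹ A₅ A₄⁻¹ A₃ A₂⁻¹ A₁ (with A₁,…,A₆ as in the tight-binding model) satisfies trace(P) = (2b/(b+ε) + (b+ε)²/b² − e^{ik})² − 2 e^{-ik}. -/
open Complex Matrix

/-- No invertibility hypothesis is needed: both sides vanish when the determinant does. -/
theorem Matrix.inv_fin_two_of {K : Type*} [Field K] (a b c d : K) :
    !![a, b; c, d]⁻¹ = (a * d - b * c)⁻¹ • !![d, -b; -c, a] := by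
  rw [inv_def, adjugate_fin_two_of, det_fin_two_of, Ring.inverse_eq_inv']

theorem trace_neg_propagation_eq {K : Type*} [Field K] {b c z w : K} (hb : b ≠ 0) (hc : c ≠ 0)
    (hzw : z * w = 1) :
    (-(!![-c, -b; 0, -b]⁻¹ * !![-b, 0; -c * z, -b] * !![-b, -b; 0, -c]⁻¹ *
        !![-c * w, 0; -b, -b] * !![-b, -c * z; 0, -b]⁻¹ * !![-b, 0; -b, -c * w])).trace =
      (2 * b / c + c ^ 2 / b ^ 2 - z) ^ 2 - 2 * w := by
  obtain rfl : w = z⁻¹ := eq_inv_of_mul_eq_one_right hzw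
  have hz : z ≠ 0 := left_ne_zero_of_mul_eq_one hzw
  simp only [inv_fin_two_of, smul_of, smul_cons, smul_empty, smul_eq_mul, mul_fin_two, neg_of,
    neg_cons, neg_empty, trace_fin_two_of, mul_zero, sub_zero]
  field_simp
  ring

theorem trace_propagation_matrix (b ε k : ℝ) (hb : 0 < b) (hbe : 0 < b + ε) :
    let eik : ℂ := Complex.exp (Complex.I * (k : ℂ))
    let emik : ℂ := Complex.exp (-(Complex.I * (k : ℂ)))
    let A1 : Matrix (Fin 2) (Fin 2) ℂ := !![-(b : ℂ), 0; -(b : ℂ), -((b : ℂ) + ε) * emik]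
    let A2 : Matrix (Fin 2) (Fin 2) ℂ := !![-(b : ℂ), -((b : ℂ) + ε) * eik; 0, -(b : ℂ)]
    let A3 : Matrix (Fin 2) (Fin 2) ℂ := !![-((b : ℂ) + ε) * emik, 0; -(b : ℂ), -(b : ℂ)]
    let A4 : Matrix (Fin 2) (Fin 2) ℂ := !![-(b : ℂ), -(b : ℂ); 0, -((b : ℂ) + ε)]
    let A5 : Matrix (Fin 2) (Fin 2) ℂ := !![-(b : ℂ), 0; -((b : ℂ) + ε) * eik, -(b : ℂ)]
    let A6 : Matrix (Fin 2) (Fin 2) ℂ := !![-((b : ℂ) + ε), -(b : ℂ); 0, -(b : ℂ)]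
    let P : Matrix (Fin 2) (Fin 2) ℂ := -(A6⁻¹ * A5 * A4⁻¹ * A3 * A2⁻¹ * A1)
    P.trace = (2 * (b : ℂ) / ((b : ℂ) + ε) + ((b : ℂ) + ε) ^ 2 / (b : ℂ) ^ 2 - eik) ^ 2
      - 2 * emik := by
  have hbe' : (b : ℂ) + ε ≠ 0 := by exact_mod_cast hbe.ne'
  exact trace_neg_propagation_eq (by exact_mod_cast hb.ne') hbe' (by rw [← Complex.exp_add]; simp)
end

section
/- Let b > 0, ε real with b + ε > 0, and k ∈ [-π, π). If k ≠ 0 or ε ≠ 0, then Re(trace(P)) > 2, where P = -A₆⁻¹ A₅ A₄⁻¹ A₃ A₂⁻¹ A₁ is the propagation matrix of the tight-binding model. More precisely, Re[(2b/(b+ε) + (b+ε)²/b² − e^{ik})² − 2e^{-ik}] > 2 whenever (k, ε) ≠ (0, 0). -/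
open Complex Matrix

set_option maxHeartbeats 1600000 in
theorem re_trace_propagation_matrix_gt_two (b ε k : ℝ) (hb : 0 < b) (hbe : 0 < b + ε)
    (hk : k ∈ Set.Ico (-Real.pi) Real.pi) (hne : (k, ε) ≠ (0, 0)) :
    let eik : ℂ := Complex.exp (Complex.I * (k : ℂ))
    let emik : ℂ := Complex.exp (-(Complex.I * (k : ℂ)))
    let A1 : Matrix (Fin 2) (Fin 2) ℂ := !![-(b : ℂ), 0; -(b : ℂ), -((b : ℂ) + ε) * emik]
    let A2 : Matrix (Fin 2) (Fin 2) ℂ := !![-(b : ℂ), -((b : ℂ) + ε) * eik; 0, -(b : ℂ)]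
    let A3 : Matrix (Fin 2) (Fin 2) ℂ := !![-((b : ℂ) + ε) * emik, 0; -(b : ℂ), -(b : ℂ)]
    let A4 : Matrix (Fin 2) (Fin 2) ℂ := !![-(b : ℂ), -(b : ℂ); 0, -((b : ℂ) + ε)]
    let A5 : Matrix (Fin 2) (Fin 2) ℂ := !![-(b : ℂ), 0; -((b : ℂ) + ε) * eik, -(b : ℂ)]
    let A6 : Matrix (Fin 2) (Fin 2) ℂ := !![-((b : ℂ) + ε), -(b : ℂ); 0, -(b : ℂ)]
    let P : Matrix (Fin 2) (Fin 2) ℂ := -(A6⁻¹ * A5 * A4⁻¹ * A3 * A2⁻¹ * A1)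
    2 < P.trace.re ∧
      2 < ((2 * (b : ℂ) / ((b : ℂ) + ε) + ((b : ℂ) + ε) ^ 2 / (b : ℂ) ^ 2 - eik) ^ 2
        - 2 * emik).re := by
  intro eik emik A1 A2 A3 A4 A5 A6 P
  have hb' : (b : ℂ) ≠ 0 := by exact_mod_cast hb.ne'
  have hbe' : ((b : ℂ) + ε) ≠ 0 := by
    have : ((b + ε : ℝ) : ℂ) ≠ 0 := by exact_mod_cast hbe.ne'
    push_cast at this; exact this
  have heik : eik ≠ 0 := Complex.exp_ne_zero _
  have hm : emik = eik⁻¹ := by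
    simp only [eik, emik, ← Complex.exp_neg]
  have h2 : A2⁻¹ = ((b:ℂ)^2)⁻¹ • !![-(b:ℂ), ((b:ℂ)+ε)*eik; 0, -(b:ℂ)] := by
    apply inv_eq_right_inv
    ext i j
    fin_cases i <;> fin_cases j <;>
      (simp [A2, Matrix.mul_apply, Fin.sum_univ_two]; try (field_simp; try ring))
  have h4 : A4⁻¹ = ((((b:ℂ)+ε)*(b:ℂ)))⁻¹ • !![-((b:ℂ)+ε), (b:ℂ); 0, -(b:ℂ)] := by
    apply inv_eq_right_inv
    ext i j
    fin_cases i <;> fin_cases j <;>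
      (simp [A4, Matrix.mul_apply, Fin.sum_univ_two]; try (field_simp; try ring))
  have h6 : A6⁻¹ = ((((b:ℂ)+ε)*(b:ℂ)))⁻¹ • !![-(b:ℂ), (b:ℂ); 0, -((b:ℂ)+ε)] := by
    apply inv_eq_right_inv
    ext i j
    fin_cases i <;> fin_cases j <;>
      (simp [A6, Matrix.mul_apply, Fin.sum_univ_two]; try (field_simp; try ring))
  have hee : eik * emik = 1 := by
    rw [hm, mul_inv_cancel₀ heik]
  have hN : ((!![-(b:ℂ), (b:ℂ); 0, -((b:ℂ)+ε)] * A5 * !![-((b:ℂ)+ε), (b:ℂ); 0, -(b:ℂ)] * A3 *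
      !![-(b:ℂ), ((b:ℂ)+ε)*eik; 0, -(b:ℂ)] * A1)).trace =
      -((2*(b:ℂ)^3 + ((b:ℂ)+ε)^3 - ((b:ℂ)+ε)*(b:ℂ)^2*eik)^2 - 2*emik*(b:ℂ)^4*((b:ℂ)+ε)^2) := by
    simp only [A1, A3, A5, Matrix.mul_fin_two, Matrix.trace_fin_two_of]
    linear_combination (-(4*(b:ℂ)^3*((b:ℂ)+ε)^3 - 2*(b:ℂ)^2*((b:ℂ)+ε)^4*eik +
      ((b:ℂ)+ε)^6*eik*emik + ((b:ℂ)+ε)^6)) * hee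
  have htr : P.trace =
      (2 * (b : ℂ) / ((b : ℂ) + ε) + ((b : ℂ) + ε) ^ 2 / (b : ℂ) ^ 2 - eik) ^ 2 - 2 * emik := by
    have hP : P.trace = -(((((b:ℂ)+ε)*(b:ℂ))⁻¹ * ((((b:ℂ)+ε)*(b:ℂ))⁻¹ * ((b:ℂ)^2)⁻¹)) *
        ((!![-(b:ℂ), (b:ℂ); 0, -((b:ℂ)+ε)] * A5 * !![-((b:ℂ)+ε), (b:ℂ); 0, -(b:ℂ)] * A3 *
          !![-(b:ℂ), ((b:ℂ)+ε)*eik; 0, -(b:ℂ)] * A1)).trace) := by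
      simp only [P, h2, h4, h6, Matrix.trace_neg, Matrix.smul_mul, Matrix.mul_smul,
        Matrix.trace_smul, smul_eq_mul]
      ring
    rw [hP, hN]
    field_simp
  set c : ℝ := 2 * b / (b + ε) + (b + ε) ^ 2 / b ^ 2 with hc
  have hcast : (2 * (b : ℂ) / ((b : ℂ) + ε) + ((b : ℂ) + ε) ^ 2 / (b : ℂ) ^ 2) = (c : ℂ) := by
    rw [hc]; push_cast; ring
  have h1e : eik = (Real.cos k : ℂ) + (Real.sin k : ℂ) * I := by
    simp only [eik, show Complex.I * (k:ℂ) = (k:ℂ) * I by ring, Complex.exp_mul_I]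
    rw [← Complex.ofReal_cos, ← Complex.ofReal_sin]
  have h2e : emik = (Real.cos k : ℂ) - (Real.sin k : ℂ) * I := by
    simp only [emik, show -(Complex.I * (k:ℂ)) = ((-k : ℝ):ℂ) * I by push_cast; ring,
      Complex.exp_mul_I]
    rw [← Complex.ofReal_cos, ← Complex.ofReal_sin, Real.cos_neg, Real.sin_neg]
    push_cast; ring
  have hEre : (((c:ℂ) - eik) ^ 2 - 2 * emik).re
      = c ^ 2 - 2 * (c + 1) * Real.cos k + 2 * (Real.cos k) ^ 2 - 1 := by
    have hE : ((c:ℂ) - eik) ^ 2 - 2 * emik =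
        ((c ^ 2 - 2 * (c + 1) * Real.cos k + 2 * (Real.cos k) ^ 2 - 1 : ℝ) : ℂ) +
        (((2 - 2 * (c - Real.cos k)) * Real.sin k : ℝ) : ℂ) * I := by
      rw [h1e, h2e]
      have hsc : Complex.sin k ^ 2 + Complex.cos k ^ 2 = 1 := Complex.sin_sq_add_cos_sq k
      push_cast
      linear_combination Complex.sin k ^ 2 * Complex.I_sq - hsc
    rw [hE]
    simp only [Complex.add_re, Complex.ofReal_re, Complex.ofReal_im, Complex.mul_re,
      Complex.mul_im, Complex.I_re, Complex.I_im]
    ring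
  -- cos bounds
  have hcos1 : Real.cos k ≤ 1 := Real.cos_le_one k
  have hcosm : -1 ≤ Real.cos k := Real.neg_one_le_cos k
  have hc3 : 3 ≤ c := by
    rw [hc]
    rw [div_add_div _ _ (ne_of_gt hbe) (by positivity), le_div_iff₀ (by positivity)]
    nlinarith [mul_nonneg (sq_nonneg ε) (by linarith : (0:ℝ) ≤ b + ε + 2 * b), sq_nonneg ε]
  have hkey : ∀ x : ℝ, -1 ≤ x → x ≤ 1 → (3 < c ∨ x < 1) →
      2 < c ^ 2 - 2 * (c + 1) * x + 2 * x ^ 2 - 1 := by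
    intro x hx1 hx2 hor
    rcases hor with h | h
    · nlinarith [sq_nonneg (x - 1), mul_pos (by linarith : (0:ℝ) < c - 3) (by linarith : (0:ℝ) < c + 1), mul_nonneg (by linarith : (0:ℝ) ≤ c - 3) (by linarith : (0:ℝ) ≤ 1 - x)]
    · nlinarith [sq_nonneg (x - 1), mul_nonneg (by linarith : (0:ℝ) ≤ c - 3) (by linarith : (0:ℝ) ≤ c + 1), mul_nonneg (by linarith : (0:ℝ) ≤ c - 3) (by linarith : (0:ℝ) ≤ 1 - x)]
  have hor : 3 < c ∨ Real.cos k < 1 := by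
    by_cases hk0 : k = 0
    · left
      have hε : ε ≠ 0 := by
        intro hε0; exact hne (by simp [hk0, hε0])
      rw [hc]
      rw [div_add_div _ _ (ne_of_gt hbe) (by positivity), lt_div_iff₀ (by positivity)]
      nlinarith [mul_pos (mul_pos (mul_self_pos.2 hε) hbe) hb,
        mul_pos (mul_self_pos.2 hε) (by linarith : (0:ℝ) < b + ε + 2 * b)]
    · right
      have hpi := Real.pi_pos
      rcases hk with ⟨hk1, hk2⟩
      have h1 : -(2 * Real.pi) < k := by linarith
      have h2 : k < 2 * Real.pi := by linarith
      rcases lt_or_eq_of_le hcos1 with h | h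
      · exact h
      · exfalso
        have := (Real.cos_eq_one_iff_of_lt_of_lt h1 h2).1 h
        exact hk0 this
  have hmain : 2 < (((c:ℂ) - eik) ^ 2 - 2 * emik).re := by
    rw [hEre]; exact hkey _ hcosm hcos1 hor
  constructor
  · rw [htr, hcast]
    exact hmain
  · rw [show (2 * (b : ℂ) / ((b : ℂ) + ε) + ((b : ℂ) + ε) ^ 2 / (b : ℂ) ^ 2 - eik) = ((c:ℂ) - eik) by rw [hcast]]
    exact hmain
end

section
/- Let b > 0, ε real with b + ε > 0 and ε ≠ 0, and set t = (b+ε)/b. Define α = -t² + 2t - 1 + 1 - 4/t + 4/t², i.e., α(b,ε,0) = -t² + 2t + 4/t² - 4/t, β(b,ε,0) = -t³ + t² + t - 3 + 2/t, and γ(b,ε,0) = t⁴ - t² + 2t - 1. Then (α - γ)² - 4β² > 0 and β ≠ 0. -/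
/-!
Clearing denominators, `α - γ ∓ 2β` are `-(t - 1)` times two quintics in `t` divided by `t²`,
and `β = -(t - 1)(t³ - t + 2) / t`. The quintics and the cubic are positive for `t ≥ 0`, so
`(α - γ)² - 4β² = (α - γ - 2β)(α - γ + 2β)` is `(t - 1)²` times a positive number, and `β`
vanishes only at `t = 1`.
-/

namespace PropagationMatrix

noncomputable def α (t : ℝ) : ℝ := -t ^ 2 + 2 * t + 4 / t ^ 2 - 4 / t

noncomputable def β (t : ℝ) : ℝ := -t ^ 3 + t ^ 2 + t - 3 + 2 / t

def γ (t : ℝ) : ℝ := t ^ 4 - t ^ 2 + 2 * t - 1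

variable {t : ℝ}

theorem α_sub_γ_sub_two_mul_β (ht : t ≠ 0) :
    α t - γ t - 2 * β t =
      -((t - 1) * (t ^ 5 - t ^ 4 + t ^ 3 + 3 * t ^ 2 - 4 * t + 4)) / t ^ 2 := by
  unfold α β γ
  field_simp
  ring

theorem α_sub_γ_add_two_mul_β (ht : t ≠ 0) :
    α t - γ t + 2 * β t =
      -((t - 1) * (t ^ 5 + 3 * t ^ 4 + t ^ 3 - t ^ 2 + 4 * t + 4)) / t ^ 2 := by
  unfold α β γ
  field_simp
  ring

theorem β_eq (ht : t ≠ 0) : β t = -((t - 1) * (t ^ 3 - t + 2)) / t := by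
  unfold β
  field_simp
  ring

theorem quintic_pos_of_nonneg₁ (ht : 0 ≤ t) :
    0 < t ^ 5 - t ^ 4 + t ^ 3 + 3 * t ^ 2 - 4 * t + 4 := by
  nlinarith [mul_nonneg (pow_nonneg ht 3) (sq_nonneg (t - 1)), sq_nonneg (t - 2 / 3),
    pow_nonneg ht 3]

theorem quintic_pos_of_nonneg₂ (ht : 0 ≤ t) :
    0 < t ^ 5 + 3 * t ^ 4 + t ^ 3 - t ^ 2 + 4 * t + 4 := by
  nlinarith [mul_nonneg ht (sq_nonneg (t - 1)), pow_nonneg ht 3, pow_nonneg ht 4, pow_nonneg ht 5]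

theorem cubic_pos_of_nonneg (ht : 0 ≤ t) : 0 < t ^ 3 - t + 2 := by
  nlinarith [mul_nonneg ht (sq_nonneg (t - 1))]

theorem discriminant_pos (ht : 0 < t) (ht1 : t ≠ 1) : 0 < (α t - γ t) ^ 2 - 4 * β t ^ 2 := by
  have hQ := quintic_pos_of_nonneg₁ ht.le
  have hP := quintic_pos_of_nonneg₂ ht.le
  have hsq : 0 < (t - 1) ^ 2 := sq_pos_of_ne_zero (sub_ne_zero.mpr ht1)
  calc 0 < (t - 1) ^ 2 * (t ^ 5 - t ^ 4 + t ^ 3 + 3 * t ^ 2 - 4 * t + 4) *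
          (t ^ 5 + 3 * t ^ 4 + t ^ 3 - t ^ 2 + 4 * t + 4) / t ^ 4 := by positivity
    _ = (α t - γ t - 2 * β t) * (α t - γ t + 2 * β t) := by
      rw [α_sub_γ_sub_two_mul_β ht.ne', α_sub_γ_add_two_mul_β ht.ne']
      ring
    _ = (α t - γ t) ^ 2 - 4 * β t ^ 2 := by ring

theorem β_ne_zero (ht : 0 < t) (ht1 : t ≠ 1) : β t ≠ 0 := by
  rw [β_eq ht.ne']
  have hcubic := cubic_pos_of_nonneg ht.le
  exact div_ne_zero (neg_ne_zero.mpr (mul_ne_zero (sub_ne_zero.mpr ht1) hcubic.ne')) ht.ne'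

end PropagationMatrix

theorem discriminant_pos_at_k_zero (b ε : ℝ) (hb : 0 < b) (hbe : 0 < b + ε) (hε : ε ≠ 0) :
    let t : ℝ := (b + ε) / b
    let α : ℝ := -t ^ 2 + 2 * t + 4 / t ^ 2 - 4 / t
    let β : ℝ := -t ^ 3 + t ^ 2 + t - 3 + 2 / t
    let γ : ℝ := t ^ 4 - t ^ 2 + 2 * t - 1
    0 < (α - γ) ^ 2 - 4 * β ^ 2 ∧ β ≠ 0 := by
  intro t _ _ _
  have ht : 0 < t := div_pos hbe hb
  have ht1 : t ≠ 1 := fun h ↦ hε (by linarith [(div_eq_one_iff_eq hb.ne').mp h])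
  exact ⟨PropagationMatrix.discriminant_pos ht ht1, PropagationMatrix.β_ne_zero ht ht1⟩
end

section
/- Let b > 0, ε ≠ 0 with b + ε > 0, t = (b+ε)/b, and let α, β, γ be the entries of P(b,ε,0) = [[α, β], [-β, γ]] as given by the explicit formulas α = -t² + 2t + 4/t² - 4/t, β = -t³ + t² + t - 3 + 2/t, γ = t⁴ - t² + 2t - 1. Then f₁ := (−α + γ − √((α-γ)²-4β²))/(2β) satisfies: f₁ < −1 if ε < 0, and −1 < f₁ < 0 if ε > 0. In particular f₁ < 0 in both cases. -/
set_option maxHeartbeats 1000000 in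
theorem eigenvector_coeff_sign (b ε : ℝ) (hb : 0 < b) (hbe : 0 < b + ε) (hε : ε ≠ 0) :
    let t : ℝ := (b + ε) / b
    let α : ℝ := -t ^ 2 + 2 * t + 4 / t ^ 2 - 4 / t
    let β : ℝ := -t ^ 3 + t ^ 2 + t - 3 + 2 / t
    let γ : ℝ := t ^ 4 - t ^ 2 + 2 * t - 1
    let f1 : ℝ := (-α + γ - Real.sqrt ((α - γ) ^ 2 - 4 * β ^ 2)) / (2 * β)
    (ε < 0 → f1 < -1) ∧ (0 < ε → -1 < f1 ∧ f1 < 0) ∧ f1 < 0 := by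
  intro t α β γ f1
  have ht : 0 < t := div_pos hbe hb
  have ht' : t ≠ 0 := ne_of_gt ht
  have htm1 : t - 1 = ε / b := by
    show (b + ε) / b - 1 = ε / b; rw [div_sub_one hb.ne']; ring
  set s : ℝ := γ - α with hs_def
  set R : ℝ := Real.sqrt ((α - γ) ^ 2 - 4 * β ^ 2) with hR_def
  have hRnn : 0 ≤ R := Real.sqrt_nonneg _
  have hD : (α - γ) ^ 2 - 4 * β ^ 2 = s ^ 2 - 4 * β ^ 2 := by rw [hs_def]; ring
  have hβt : β * t = -((t - 1) * (t ^ 3 - t + 2)) := by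
    simp only [β]; field_simp; ring
  have hst : s * t ^ 2 = (t - 1) * (t ^ 2 * (t + 1) * (t ^ 2 + 1) + 4) := by
    simp only [hs_def, γ, α]; field_simp; ring
  have hsbt : (s + 2 * β) * t ^ 2 =
      (t - 1) * (t ^ 5 - t ^ 4 + t ^ 3 + 3 * t ^ 2 - 4 * t + 4) := by
    simp only [hs_def, γ, α, β]; field_simp; ring
  have hP1 : 0 < t ^ 3 - t + 2 := by
    nlinarith [sq_nonneg (t - 1), sq_nonneg (t + 1), mul_pos ht ht]
  have hP2 : 0 < t ^ 2 * (t + 1) * (t ^ 2 + 1) + 4 := by positivity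
  have hP3 : 0 < t ^ 5 - t ^ 4 + t ^ 3 + 3 * t ^ 2 - 4 * t + 4 := by
    nlinarith [sq_nonneg (t - 1), mul_pos (mul_pos ht ht) ht, mul_pos ht ht,
      mul_nonneg (mul_nonneg (mul_nonneg ht.le ht.le) ht.le) (sq_nonneg (t - 1))]
  have ht2 : (0:ℝ) < t ^ 2 := by positivity
  have hf1 : f1 = (s - R) / (2 * β) := by
    simp only [f1, hs_def, hR_def]; ring_nf
  clear_value f1 R s γ β α t
  have case_neg : ε < 0 → f1 < -1 := by
    intro hεneg
    have htlt : t - 1 < 0 := by rw [htm1]; exact div_neg_of_neg_of_pos hεneg hb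
    have hβpos : 0 < β := by
      have h1 : 0 < β * t := by rw [hβt]; nlinarith
      by_contra h
      push_neg at h
      nlinarith [mul_nonpos_of_nonpos_of_nonneg h ht.le]
    have hsb : s + 2 * β < 0 := by
      have h1 : (s + 2 * β) * t ^ 2 < 0 := by rw [hsbt]; nlinarith
      by_contra h
      push_neg at h
      nlinarith [mul_nonneg h ht2.le]
    rw [hf1, div_lt_iff₀ (by linarith : (0:ℝ) < 2 * β)]
    nlinarith
  have case_pos : 0 < ε → -1 < f1 ∧ f1 < 0 := by
    intro hεpos
    have htgt : 0 < t - 1 := by rw [htm1]; exact div_pos hεpos hb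
    have hβneg : β < 0 := by
      have h1 : β * t < 0 := by rw [hβt]; nlinarith
      by_contra h
      push_neg at h
      nlinarith [mul_nonneg h ht.le]
    have hspos : 0 < s := by
      have h1 : 0 < s * t ^ 2 := by rw [hst]; nlinarith
      by_contra h
      push_neg at h
      nlinarith [mul_nonpos_of_nonpos_of_nonneg h ht2.le]
    have hsb : 0 < s + 2 * β := by
      have h1 : 0 < (s + 2 * β) * t ^ 2 := by rw [hsbt]; nlinarith
      by_contra h
      push_neg at h
      nlinarith [mul_nonpos_of_nonpos_of_nonneg h ht2.le]
    have hRlt : R < s := by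
      rw [hR_def, hD]
      rw [Real.sqrt_lt' hspos]
      nlinarith [sq_nonneg β]
    have hRgt : s + 2 * β < R := by
      rw [hR_def, hD]
      rw [show s + 2 * β < Real.sqrt (s ^ 2 - 4 * β ^ 2) ↔
          (s + 2 * β) ^ 2 < s ^ 2 - 4 * β ^ 2 from Real.lt_sqrt hsb.le]
      nlinarith [mul_pos (neg_pos.mpr hβneg) hsb]
    constructor
    · rw [hf1, lt_div_iff_of_neg (by linarith : 2 * β < 0)]
      nlinarith
    · rw [hf1]
      exact div_neg_of_pos_of_neg (by linarith) (by linarith)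
  refine ⟨case_neg, case_pos, ?_⟩
  rcases lt_or_gt_of_ne hε with h | h
  · linarith [case_neg h]
  · exact (case_pos h).2
end
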